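/- arXiv:1705.05214 — 6 statements merged into one kernel-verified Lean document; each statement's English description precedes it below -/
import Mathlib

section
/- For all nonnegative reals a and b with a + b > 0, the double series ∑_{k=0}^∞ ∑_{m=0}^∞ a^k b^m / (k! · m! · Γ(k+m+3/2)) converges and equals sinh(2√(a+b)) / (√π · √(a+b)). -/
/-!
Summing along the diagonals k + m = n, the binomial theorem collapses the double series to
∑ (a + b)ⁿ / (n! Γ(n + 3/2)), and Legendre's duplication formula gives
n! Γ(n + 3/2) = (2n + 1)! √π / 2²ⁿ⁺¹, so this is the sinh series at 2√(a + b) divided by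
√π √(a + b). All terms are nonnegative, so the diagonal rearrangement also yields summability
of the double family.
-/

open Real Finset Nat

theorem Real.factorial_mul_Gamma_add_three_halves (n : ℕ) :
    (n ! : ℝ) * Gamma (n + 3 / 2) = (2 * n + 1)! * √π / 2 ^ (2 * n + 1) := by
  have h := Gamma_mul_Gamma_add_half (n + 1)
  have hexp : (1 : ℝ) - 2 * (n + 1) = -((2 * n + 1 : ℕ) : ℝ) := by push_cast; ring
  have htwice : 2 * ((n : ℝ) + 1) = (2 * n + 1 : ℕ) + 1 := by push_cast; ring
  rw [show (n : ℝ) + 1 + 1 / 2 = n + 3 / 2 by ring, hexp, htwice, Gamma_nat_eq_factorial,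
    Gamma_nat_eq_factorial, rpow_neg two_pos.le, rpow_natCast] at h
  rw [h]
  field_simp

theorem sum_antidiagonal_pow_div_factorial_mul {K : Type*} [Field K] [CharZero K] (x y : K)
    (n : ℕ) :
    ∑ p ∈ antidiagonal n, x ^ p.1 * y ^ p.2 / (p.1 ! * p.2 !) = (x + y) ^ n / n ! := by
  rw [(Commute.all x y).add_pow', sum_div]
  refine sum_congr rfl fun p hp => ?_
  rw [HasAntidiagonal.mem_antidiagonal] at hp
  subst hp
  rw [nsmul_eq_mul, ← add_choose_mul_factorial_mul_factorial, choose_symm_add]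
  have hchoose : ((p.1 + p.2).choose p.2 : K) ≠ 0 := mod_cast (choose_pos (by omega)).ne'
  push_cast
  rw [mul_assoc _ (p.1 ! : K), mul_div_mul_left _ _ hchoose]

theorem hasSum_of_hasSum_sum_antidiagonal_of_nonneg {A : Type*} [AddCommMonoid A]
    [HasAntidiagonal A] {f : A × A → ℝ} (hf : 0 ≤ f) {s : ℝ}
    (h : HasSum (fun n => ∑ p ∈ antidiagonal n, f p) s) : HasSum f s := by
  set e := HasAntidiagonal.sigmaAntidiagonalEquivProd (A := A)
  have hfiber (n : A) :
      HasSum (fun p : antidiagonal n => f (e ⟨n, p⟩)) (∑ p ∈ antidiagonal n, f p) :=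
    (antidiagonal n).hasSum f
  have hsum : Summable (f ∘ e) := (summable_sigma_of_nonneg fun _ => hf _).mpr
    ⟨fun n => (hfiber n).summable, by simpa only [(hfiber _).tsum_eq] using h.summable⟩
  rw [← e.hasSum_iff]
  convert hsum.hasSum
  exact h.unique (hsum.hasSum.sigma hfiber)

theorem Real.hasSum_pow_div_factorial_mul_Gamma_add_three_halves {c : ℝ} (hc : 0 < c) :
    HasSum (fun n : ℕ => c ^ n / (n ! * Gamma (n + 3 / 2))) (sinh (2 * √c) / (√π * √c)) := by
  refine ((hasSum_sinh (2 * √c)).div_const (√π * √c)).congr_fun fun n => ?_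
  have hsqrt : √c ^ (2 * n + 1) = c ^ n * √c := by rw [pow_succ, pow_mul, sq_sqrt hc.le]
  have hsqrt_pos : 0 < √c := sqrt_pos.mpr hc
  rw [factorial_mul_Gamma_add_three_halves, mul_pow, hsqrt]
  field_simp

theorem stmt_0 (a b : ℝ) (ha : 0 ≤ a) (hb : 0 ≤ b) (hab : 0 < a + b) :
    Summable (fun p : ℕ × ℕ =>
      a ^ p.1 * b ^ p.2 /
        (p.1.factorial * p.2.factorial * Real.Gamma ((p.1 : ℝ) + p.2 + 3 / 2))) ∧
    ∑' (k : ℕ), ∑' (m : ℕ),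
        a ^ k * b ^ m /
          (k.factorial * m.factorial * Real.Gamma ((k : ℝ) + m + 3 / 2)) =
      Real.sinh (2 * Real.sqrt (a + b)) / (Real.sqrt π * Real.sqrt (a + b)) := by
  have hdiag (n : ℕ) : ∑ p ∈ antidiagonal n,
      a ^ p.1 * b ^ p.2 / (p.1.factorial * p.2.factorial * Gamma ((p.1 : ℝ) + p.2 + 3 / 2)) =
      (a + b) ^ n / (n.factorial * Gamma (n + 3 / 2)) := by
    rw [← div_div, ← sum_antidiagonal_pow_div_factorial_mul, sum_div]
    refine sum_congr rfl fun p hp => ?_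
    rw [HasAntidiagonal.mem_antidiagonal] at hp
    rw [← div_div, ← hp, Nat.cast_add]
  have hsum := hasSum_of_hasSum_sum_antidiagonal_of_nonneg (fun p => by positivity)
    ((hasSum_pow_div_factorial_mul_Gamma_add_three_halves hab).congr_fun hdiag)
  exact ⟨hsum.summable, hsum.summable.tsum_prod.symm.trans hsum.tsum_eq⟩
end

section
/- For every natural number k and every real β, ∫_0^{π/2} exp(-β·cos(2θ)) · (sin(2θ))^{2k+1} dθ = (√π/2) · k! · ∑_{m=0}^∞ β^{2m} / (2^{2m} · m! · Γ(k+m+3/2)). -/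
/-!
The substitution `x = cos 2θ` turns the integral into `(1/2) ∫_{-1}^{1} e^{-βx} (1 - x²)^k dx`,
whose even part is `∫_0^1 cosh (βx) (1 - x²)^k dx`. Expanding `cosh` and integrating termwise
(dominated convergence), each term is the Beta integral
`∫_0^1 x^{2m} (1 - x²)^k dx = Γ(m + 1/2) k! / (2 Γ(k + m + 3/2))`, obtained by induction on `k`
through integration by parts; finally `Γ(m + 1/2) 4^m m! = √π (2m)!` cancels the `(2m)!`.
-/

open Real Nat MeasureTheory

lemma Real.Gamma_nat_add_half_mul (m : ℕ) :
    Gamma (m + 1 / 2) * (2 ^ (2 * m) * m !) = √π * (2 * m)! := by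
  have hfact : ((2 * m)! : ℝ) = 2 ^ m * m ! * (2 * m - 1)‼ := by
    rcases m with _ | m
    · simp
    · rw [show 2 * (m + 1) - 1 = 2 * m + 1 by omega, show 2 * (m + 1) = 2 * m + 1 + 1 by ring,
        factorial_eq_mul_doubleFactorial, show 2 * m + 1 + 1 = 2 * (m + 1) by ring,
        doubleFactorial_two_mul]
      push_cast; ring
  rw [Gamma_nat_add_half, hfact, pow_mul']
  field_simp

lemma integral_neg_self_eq_integral_add_comp_neg {f : ℝ → ℝ} {a : ℝ} (ha : 0 ≤ a)
    (hf : IntervalIntegrable f volume (-a) a) :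
    ∫ x in -a..a, f x = ∫ x in 0..a, (f x + f (-x)) := by
  have hleft : IntervalIntegrable f volume (-a) 0 :=
    hf.mono_set (Set.uIcc_subset_uIcc_left (by simp [Set.uIcc_of_le, ha]))
  have hright : IntervalIntegrable f volume 0 a :=
    hf.mono_set (Set.uIcc_subset_uIcc_right (by simp [Set.uIcc_of_le, ha]))
  have hreflect : IntervalIntegrable (fun x => f (-x)) volume 0 a := by
    simpa using ((IntervalIntegrable.iff_comp_neg).mp hleft).symm
  rw [intervalIntegral.integral_add hright hreflect,
    intervalIntegral.integral_comp_neg, neg_zero, add_comm,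
    intervalIntegral.integral_add_adjacent_intervals hleft hright]

lemma integral_comp_cos_two_mul_mul_sin_two_mul {g : ℝ → ℝ} (hg : Continuous g) :
    ∫ θ in 0..π / 2, g (cos (2 * θ)) * sin (2 * θ) = (1 / 2) * ∫ x in -1..1, g x := by
  have hderiv : ∀ θ ∈ Set.uIcc 0 (π / 2),
      HasDerivAt (fun θ => cos (2 * θ)) (-(2 * sin (2 * θ))) θ := fun θ _ => by
    simpa [mul_comm] using ((hasDerivAt_id θ).const_mul 2).cos
  have h := intervalIntegral.integral_comp_mul_deriv hderiv (by fun_prop) hg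
  simp only [Function.comp_def, mul_zero, cos_zero, show 2 * (π / 2) = π by ring, cos_pi,
    mul_neg, intervalIntegral.integral_neg] at h
  rw [intervalIntegral.integral_symm 1, ← h]
  simp only [neg_neg, mul_left_comm _ (2 : ℝ), intervalIntegral.integral_const_mul]
  ring

lemma integral_pow_mul_one_sub_sq_pow_succ (n k : ℕ) :
    ((n : ℝ) + 1) * ∫ x in 0..1, x ^ n * (1 - x ^ 2) ^ (k + 1) =
      2 * ((k : ℝ) + 1) * ∫ x in 0..1, x ^ (n + 2) * (1 - x ^ 2) ^ k := by
  have hderiv : ∀ x ∈ Set.uIcc (0 : ℝ) 1,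
      HasDerivAt (fun x => x ^ (n + 1) * (1 - x ^ 2) ^ (k + 1))
      ((n + 1) * (x ^ n * (1 - x ^ 2) ^ (k + 1)) - 2 * (k + 1) * (x ^ (n + 2) * (1 - x ^ 2) ^ k))
      x := fun x _ => by
    have h : HasDerivAt (fun x => x ^ (n + 1) * (1 - x ^ 2) ^ (k + 1)) _ x :=
      (hasDerivAt_pow (n + 1) x).mul (((hasDerivAt_pow 2 x).const_sub 1).pow (k + 1))
    convert h using 1
    push_cast; ring
  have hFTC := intervalIntegral.integral_eq_sub_of_hasDerivAt hderiv (by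
    apply Continuous.intervalIntegrable; fun_prop)
  rw [intervalIntegral.integral_sub (by apply Continuous.intervalIntegrable; fun_prop)
      (by apply Continuous.intervalIntegrable; fun_prop),
    intervalIntegral.integral_const_mul, intervalIntegral.integral_const_mul] at hFTC
  simpa [sub_eq_zero] using hFTC

lemma integral_pow_mul_one_sub_sq_pow (n k : ℕ) :
    ∫ x in 0..1, x ^ n * (1 - x ^ 2) ^ k =
      Gamma ((n + 1) / 2) * k ! / (2 * Gamma ((n + 1) / 2 + k + 1)) := by
  induction k generalizing n with
  | zero =>
    have hs : (n + 1 : ℝ) / 2 ≠ 0 := by positivity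
    simp only [pow_zero, mul_one, integral_pow, CharP.cast_eq_zero, add_zero, factorial_zero,
      cast_one, Gamma_add_one hs]
    field_simp
    simp
  | succ k ih =>
    have hs : (n + 1 : ℝ) / 2 ≠ 0 := by positivity
    have hrec := integral_pow_mul_one_sub_sq_pow_succ n k
    rw [ih, show ((n + 2 : ℕ) + 1 : ℝ) / 2 = (n + 1) / 2 + 1 by push_cast; ring,
      Gamma_add_one hs,
      show (n + 1 : ℝ) / 2 + 1 + k + 1 = (n + 1) / 2 + (k + 1) + 1 by ring] at hrec
    have hΓ : Gamma ((n + 1 : ℝ) / 2 + (k + 1) + 1) ≠ 0 :=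
      (Gamma_pos_of_pos (by positivity)).ne'
    push_cast [factorial_succ]
    field_simp at hrec ⊢
    linarith

lemma hasSum_integral_cosh_mul_one_sub_sq_pow (β : ℝ) (k : ℕ) :
    HasSum (fun m : ℕ => β ^ (2 * m) / (2 * m)! * ∫ x in 0..1, x ^ (2 * m) * (1 - x ^ 2) ^ k)
      (∫ x in 0..1, cosh (β * x) * (1 - x ^ 2) ^ k) := by
  simp_rw [← intervalIntegral.integral_const_mul]
  refine intervalIntegral.hasSum_integral_of_dominated_convergence
    (fun m _ => β ^ (2 * m) / (2 * m)!) (fun m => by fun_prop) (fun m => ?_)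
    (.of_forall fun _ _ => (hasSum_cosh β).summable) intervalIntegrable_const
    (.of_forall fun x _ => ?_)
  · refine .of_forall fun x hx => ?_
    rw [Set.uIoc_of_le zero_le_one] at hx
    have hcoeff : 0 ≤ β ^ (2 * m) / (2 * m)! :=
      div_nonneg ((even_two_mul m).pow_nonneg β) (cast_nonneg _)
    have hweight : 0 ≤ 1 - x ^ 2 := sub_nonneg.2 (pow_le_one₀ hx.1.le hx.2)
    rw [norm_mul, Real.norm_of_nonneg hcoeff, Real.norm_of_nonneg (by have := hx.1; positivity)]
    refine mul_le_of_le_one_right hcoeff (mul_le_one₀ (pow_le_one₀ hx.1.le hx.2)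
      (by positivity) (pow_le_one₀ hweight (by nlinarith)))
  · simpa [mul_pow, div_mul_eq_mul_div, mul_assoc] using
      (hasSum_cosh (β * x)).mul_right ((1 - x ^ 2) ^ k)

lemma integral_exp_mul_cos_two_mul_mul_sin_pow (β : ℝ) (k : ℕ) :
    ∫ θ in 0..π / 2, exp (-β * cos (2 * θ)) * sin (2 * θ) ^ (2 * k + 1) =
      ∫ x in 0..1, cosh (β * x) * (1 - x ^ 2) ^ k := by
  have hsin (θ : ℝ) : sin θ ^ (2 * k + 1) = (1 - cos θ ^ 2) ^ k * sin θ := by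
    rw [pow_succ, pow_mul, sin_sq]
  have hcosh (x : ℝ) : exp (-β * x) + exp (-β * -x) = 2 * cosh (β * x) := by
    rw [cosh_eq]; ring_nf
  simp_rw [hsin, ← mul_assoc]
  rw [integral_comp_cos_two_mul_mul_sin_two_mul (g := fun x => exp (-β * x) * (1 - x ^ 2) ^ k)
      (by fun_prop),
    integral_neg_self_eq_integral_add_comp_neg zero_le_one (by
      apply Continuous.intervalIntegrable; fun_prop)]
  simp_rw [neg_sq, ← add_mul, hcosh, mul_assoc, intervalIntegral.integral_const_mul]
  ring

theorem stmt_2 (k : ℕ) (β : ℝ) :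
    ∫ θ in (0 : ℝ)..(π / 2),
        Real.exp (-β * Real.cos (2 * θ)) * (Real.sin (2 * θ)) ^ (2 * k + 1) =
      (Real.sqrt π / 2) * k.factorial *
        ∑' m : ℕ,
          β ^ (2 * m) /
            (2 ^ (2 * m) * m.factorial * Real.Gamma ((k : ℝ) + m + 3 / 2)) := by
  rw [integral_exp_mul_cos_two_mul_mul_sin_pow,
    ← (hasSum_integral_cosh_mul_one_sub_sq_pow β k).tsum_eq, ← tsum_mul_left]
  congr 1 with m
  rw [integral_pow_mul_one_sub_sq_pow,
    show ((2 * m : ℕ) + 1 : ℝ) / 2 = m + 1 / 2 by push_cast; ring,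
    show (m + 1 / 2 : ℝ) + k + 1 = k + m + 3 / 2 by ring,
    eq_div_of_mul_eq (by positivity) (Gamma_nat_add_half_mul m)]
  have hΓ : Gamma ((k : ℝ) + m + 3 / 2) ≠ 0 := (Gamma_pos_of_pos (by positivity)).ne'
  field_simp
end

section
/- Let φ₁, φ₂, φ₃ > 0 with φ₁, φ₂, φ₃ pairwise distinct, and define F(x) = 1 - (e^{-x/φ₃}/(φ₂-φ₁)) · (φ₂·e^{-x/φ₂} - φ₁·e^{-x/φ₁} + x·(Ei(-x/φ₂) - Ei(-x/φ₁))) for x > 0. Then F(x) = ((1/φ₃) + (log φ₂ - log φ₁)/(φ₂ - φ₁))·x + o(x) as x → 0⁺. -/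
open Real Filter Asymptotics

/-- The exponential integral `Ei` (principal value), defined through its
standard series representation `Ei x = γ + log |x| + ∑ xⁿ/(n·n!)`. -/
noncomputable def Ei (x : ℝ) : ℝ :=
  Real.eulerMascheroniConstant + Real.log |x| +
    ∑' n : ℕ, x ^ (n + 1) / ((n + 1) * (n + 1).factorial)

/-!
For `x > 0` the two `log x` terms of `Ei (-x / φ₂) - Ei (-x / φ₁)` cancel, so `F` agrees with a
function `cdfExtension` that is differentiable at `0` and vanishes there; the claim is its
first-order Taylor expansion. Since the entire part of `Ei` has derivative `1` at `0`, the
bracket has derivative `log φ₁ - log φ₂` at `0`, which gives the constant.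
-/

noncomputable def eiSeries (y : ℝ) : ℝ :=
  ∑' n : ℕ, y ^ (n + 1) / ((n + 1) * (n + 1).factorial)

lemma eiSeries_zero : eiSeries 0 = 0 := by simp [eiSeries]

lemma Ei_neg_div {x φ : ℝ} (hx : x ≠ 0) (hφ : φ ≠ 0) :
    Ei (-x / φ) = eulerMascheroniConstant + (log x - log φ) + eiSeries (-x / φ) := by
  rw [Ei, log_abs, neg_div, log_neg_eq_log, log_div hx hφ]
  rfl

lemma hasDerivAt_eiSeries (y : ℝ) :
    HasDerivAt eiSeries (∑' n : ℕ, y ^ n / (n + 1).factorial) y := by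
  set r := |y| + 1
  have hbound : Summable fun n : ℕ => r ^ n / (n + 1).factorial :=
    (summable_pow_div_factorial r).of_nonneg_of_le (fun n => by positivity) fun n =>
      div_le_div_of_nonneg_left (by positivity) (by positivity)
        (by exact_mod_cast Nat.factorial_le n.le_succ)
  have hy : y ∈ Metric.ball (0 : ℝ) r := by
    rw [mem_ball_zero_iff, norm_eq_abs]; exact lt_add_one _
  refine hasDerivAt_tsum_of_isPreconnected (y₀ := 0)
    (g := fun (n : ℕ) (z : ℝ) => z ^ (n + 1) / ((n + 1) * (n + 1).factorial))
    (g' := fun (n : ℕ) (z : ℝ) => z ^ n / (n + 1).factorial) hbound Metric.isOpen_ball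
    (convex_ball 0 r).isPreconnected (fun n z _ => ?_) (fun n z hz => ?_)
    (Metric.mem_ball_self (by positivity)) ?_ hy
  · refine ((hasDerivAt_pow (n + 1) z).div_const _).congr_deriv ?_
    rw [Nat.add_sub_cancel, Nat.cast_succ, mul_div_mul_left _ _ (by positivity)]
  · rw [mem_ball_zero_iff] at hz
    rw [norm_div, norm_pow, Real.norm_natCast]
    gcongr
  · simp

lemma hasDerivAt_eiSeries_zero : HasDerivAt eiSeries 1 0 := by
  convert hasDerivAt_eiSeries 0
  rw [tsum_eq_single 0 fun n hn => by simp [hn]]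
  simp

lemma hasDerivAt_exp_neg_div (φ : ℝ) : HasDerivAt (fun x => exp (-x / φ)) (-1 / φ) 0 := by
  simpa using ((hasDerivAt_id (0 : ℝ)).neg.div_const φ).exp

lemma hasDerivAt_eiSeries_neg_div (φ : ℝ) :
    HasDerivAt (fun x => eiSeries (-x / φ)) (-1 / φ) 0 := by
  have h := hasDerivAt_eiSeries_zero.comp_of_eq (0 : ℝ)
    ((hasDerivAt_id (0 : ℝ)).neg.div_const φ) (by simp)
  rwa [one_mul] at h

noncomputable def cdfExtension (φ₁ φ₂ φ₃ x : ℝ) : ℝ :=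
  1 - exp (-x / φ₃) / (φ₂ - φ₁) *
    (φ₂ * exp (-x / φ₂) - φ₁ * exp (-x / φ₁) +
      x * (log φ₁ - log φ₂ + (eiSeries (-x / φ₂) - eiSeries (-x / φ₁))))

lemma cdfExtension_eq {φ₁ φ₂ x : ℝ} (φ₃ : ℝ) (h₁ : φ₁ ≠ 0) (h₂ : φ₂ ≠ 0) (hx : x ≠ 0) :
    cdfExtension φ₁ φ₂ φ₃ x = 1 - exp (-x / φ₃) / (φ₂ - φ₁) *
      (φ₂ * exp (-x / φ₂) - φ₁ * exp (-x / φ₁) + x * (Ei (-x / φ₂) - Ei (-x / φ₁))) := by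
  rw [cdfExtension, Ei_neg_div hx h₂, Ei_neg_div hx h₁]
  ring_nf

lemma cdfExtension_zero {φ₁ φ₂ : ℝ} (φ₃ : ℝ) (h12 : φ₁ ≠ φ₂) : cdfExtension φ₁ φ₂ φ₃ 0 = 0 := by
  simp [cdfExtension, sub_ne_zero.2 h12.symm]

lemma hasDerivAt_cdfExtension_zero {φ₁ φ₂ : ℝ} (φ₃ : ℝ) (h₁ : φ₁ ≠ 0) (h₂ : φ₂ ≠ 0)
    (h12 : φ₁ ≠ φ₂) :
    HasDerivAt (cdfExtension φ₁ φ₂ φ₃) (1 / φ₃ + (log φ₂ - log φ₁) / (φ₂ - φ₁)) 0 := by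
  have hbracket := (((hasDerivAt_exp_neg_div φ₂).const_mul φ₂).sub
    ((hasDerivAt_exp_neg_div φ₁).const_mul φ₁)).add
      ((hasDerivAt_id (0 : ℝ)).mul ((hasDerivAt_const (0 : ℝ) (log φ₁ - log φ₂)).add
        ((hasDerivAt_eiSeries_neg_div φ₂).sub (hasDerivAt_eiSeries_neg_div φ₁))))
  have h := (((hasDerivAt_exp_neg_div φ₃).div_const (φ₂ - φ₁)).mul hbracket).const_sub 1
  refine h.congr_deriv ?_
  simp only [Pi.add_apply, Pi.sub_apply, Pi.mul_apply, id, neg_zero, zero_div, exp_zero,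
    eiSeries_zero]
  field_simp [sub_ne_zero.2 h12.symm]
  ring

theorem stmt_6_general (φ₁ φ₂ φ₃ : ℝ) (h₁ : 0 < φ₁) (h₂ : 0 < φ₂)
    (h12 : φ₁ ≠ φ₂)
    (F : ℝ → ℝ)
    (hF : ∀ x : ℝ, 0 < x → F x =
      1 - Real.exp (-x / φ₃) / (φ₂ - φ₁) *
        (φ₂ * Real.exp (-x / φ₂) - φ₁ * Real.exp (-x / φ₁) +
          x * (Ei (-x / φ₂) - Ei (-x / φ₁)))) :
    (fun x : ℝ =>
        F x - (1 / φ₃ + (Real.log φ₂ - Real.log φ₁) / (φ₂ - φ₁)) * x)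
      =o[nhdsWithin 0 (Set.Ioi 0)] (fun x : ℝ => x) := by
  have hG := hasDerivAt_iff_isLittleO.mp (hasDerivAt_cdfExtension_zero φ₃ h₁.ne' h₂.ne' h12)
  refine (hG.mono nhdsWithin_le_nhds).congr' ?_ (by simp)
  filter_upwards [self_mem_nhdsWithin] with x (hx : 0 < x)
  rw [hF x hx, cdfExtension_zero φ₃ h12, cdfExtension_eq φ₃ h₁.ne' h₂.ne' hx.ne', sub_zero,
    sub_zero, smul_eq_mul, mul_comm x (_ + _)]

theorem stmt_6 (φ₁ φ₂ φ₃ : ℝ) (h₁ : 0 < φ₁) (h₂ : 0 < φ₂) (h₃ : 0 < φ₃)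
    (h12 : φ₁ ≠ φ₂) (h13 : φ₁ ≠ φ₃) (h23 : φ₂ ≠ φ₃)
    (F : ℝ → ℝ)
    (hF : ∀ x : ℝ, 0 < x → F x =
      1 - Real.exp (-x / φ₃) / (φ₂ - φ₁) *
        (φ₂ * Real.exp (-x / φ₂) - φ₁ * Real.exp (-x / φ₁) +
          x * (Ei (-x / φ₂) - Ei (-x / φ₁)))) :
    (fun x : ℝ =>
        F x - (1 / φ₃ + (Real.log φ₂ - Real.log φ₁) / (φ₂ - φ₁)) * x)
      =o[nhdsWithin 0 (Set.Ioi 0)] (fun x : ℝ => x) :=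
  stmt_6_general φ₁ φ₂ φ₃ h₁ h₂ h12 F hF
end

section
/- Let φ₃ > 0 be fixed, and for φ₁, φ₂ > 0 with φ₁ ≠ φ₂ define a(φ₁, φ₂) = 1/φ₃ + (log φ₂ - log φ₁)/(φ₂ - φ₁), extended by a(φ, φ) = 1/φ₃ + 1/φ. Under the constraint φ₁ + φ₂ = c for a fixed constant c > 0, the function a attains its minimum exactly when φ₁ = φ₂ = c/2, and a(φ₁, c - φ₁) → ∞ as φ₁ → 0⁺. -/
/-!
The difference quotient `(log y - log x) / (y - x)` is the reciprocal of the logarithmic mean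
of `x` and `y`, which is strictly smaller than their arithmetic mean `(x + y) / 2` unless
`x = y`; this follows from the series `log (y / x) = 2 ∑ t ^ (2k+1) / (2k+1)` with
`t = (y - x) / (x + y)`, whose first term is `2 t`. Under `φ₁ + φ₂ = c` the value at
`φ₁ = φ₂ = c / 2` is exactly `1 / φ₃ + 2 / c`. As `φ₁ → 0⁺` the numerator `log (c - φ₁) - log φ₁`
blows up while the denominator tends to `c`.
-/

open Real Filter Topology

lemma Real.two_mul_sub_div_add_lt_log_sub_log {x y : ℝ} (hx : 0 < x) (hxy : x < y) :
    2 * (y - x) / (x + y) < log y - log x := by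
  have ha : 0 ≤ y / x - 1 := by rw [sub_nonneg, one_le_div hx]; exact hxy.le
  have hseries := hasSum_log_one_add ha
  have hratio : (y / x - 1) / (y / x - 1 + 2) = (y - x) / (x + y) := by
    field_simp; ring
  rw [add_sub_cancel, hratio, log_div (by linarith) hx.ne'] at hseries
  have hpos : 0 < (y - x) / (x + y) := div_pos (by linarith) (by linarith)
  calc 2 * (y - x) / (x + y)
      < ∑ k ∈ Finset.range 2, 2 * (1 / (2 * (k : ℝ) + 1)) * ((y - x) / (x + y)) ^ (2 * k + 1) := by
        norm_num [Finset.sum_range_succ, mul_div_assoc]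
        positivity
    _ ≤ log y - log x := sum_le_hasSum _ (fun k _ => by positivity) hseries

lemma Real.two_div_add_lt_slope_log {x y : ℝ} (hx : 0 < x) (hy : 0 < y) (hxy : x ≠ y) :
    2 / (x + y) < (log y - log x) / (y - x) := by
  rcases hxy.lt_or_gt with hlt | hgt
  · rw [lt_div_iff₀ (sub_pos.2 hlt), div_mul_eq_mul_div]
    exact two_mul_sub_div_add_lt_log_sub_log hx hlt
  · rw [← neg_div_neg_eq (log y - log x), neg_sub, neg_sub, add_comm,
      lt_div_iff₀ (sub_pos.2 hgt), div_mul_eq_mul_div]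
    exact two_mul_sub_div_add_lt_log_sub_log hy hgt

lemma Real.tendsto_slope_log_sub_nhdsGT_zero {c : ℝ} (hc : 0 < c) :
    Tendsto (fun x => (log (c - x) - log x) / (c - x - x)) (𝓝[>] 0) atTop := by
  have hsub : Tendsto (fun x : ℝ => c - x) (𝓝[>] 0) (𝓝 c) :=
    tendsto_nhdsWithin_of_tendsto_nhds (Continuous.tendsto' (by fun_prop) 0 c (by simp))
  have hlog : Tendsto (fun x => log (c - x) - log x) (𝓝[>] 0) atTop :=
    (hsub.log hc.ne').add_atTop (tendsto_neg_atBot_atTop.comp tendsto_log_nhdsGT_zero)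
  have hden : Tendsto (fun x : ℝ => c - x - x) (𝓝[>] 0) (𝓝 c) :=
    tendsto_nhdsWithin_of_tendsto_nhds (Continuous.tendsto' (by fun_prop) 0 c (by simp))
  exact hlog.atTop_mul_pos (inv_pos.2 hc) (hden.inv₀ hc.ne')

theorem stmt_8_general (φ₃ c : ℝ) (hc : 0 < c) (A : ℝ → ℝ → ℝ)
    (hA : ∀ x y : ℝ, A x y =
      if x = y then 1 / φ₃ + 1 / x
      else 1 / φ₃ + (Real.log y - Real.log x) / (y - x)) :
    (∀ φ₁ : ℝ, 0 < φ₁ → φ₁ < c → φ₁ ≠ c / 2 →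
        A (c / 2) (c / 2) < A φ₁ (c - φ₁)) ∧
      Tendsto (fun φ₁ : ℝ => A φ₁ (c - φ₁)) (nhdsWithin 0 (Set.Ioi 0)) atTop := by
  constructor
  · intro φ₁ h₀ h₁ hmid
    have hne : φ₁ ≠ c - φ₁ := fun h => hmid (by linarith)
    have key := two_div_add_lt_slope_log h₀ (sub_pos.2 h₁) hne
    rw [add_sub_cancel] at key
    rw [hA, hA, if_pos rfl, if_neg hne, one_div_div]
    exact add_lt_add_right key _
  · refine (tendsto_atTop_add_const_left _ (1 / φ₃) (tendsto_slope_log_sub_nhdsGT_zero hc)).congr' ?_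
    filter_upwards [Ioo_mem_nhdsGT (half_pos hc)] with x hx
    rw [hA, if_neg (by linarith [hx.1, hx.2] : x ≠ c - x)]

theorem stmt_8 (φ₃ c : ℝ) (h₃ : 0 < φ₃) (hc : 0 < c) (A : ℝ → ℝ → ℝ)
    (hA : ∀ x y : ℝ, A x y =
      if x = y then 1 / φ₃ + 1 / x
      else 1 / φ₃ + (Real.log y - Real.log x) / (y - x)) :
    (∀ φ₁ : ℝ, 0 < φ₁ → φ₁ < c → φ₁ ≠ c / 2 →
        A (c / 2) (c / 2) < A φ₁ (c - φ₁)) ∧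
      Tendsto (fun φ₁ : ℝ => A φ₁ (c - φ₁)) (nhdsWithin 0 (Set.Ioi 0)) atTop :=
  stmt_8_general φ₃ c hc A hA
end

section
/- For φ₁, φ₂, φ₃ > 0 pairwise distinct and x > 0, ∫_x^∞ e^{-λ/φ₃} · (Ei((1/φ₃-1/φ₂)λ) - Ei((1/φ₃-1/φ₁)λ)) dλ = φ₃ · [ e^{-x/φ₃}·(Ei((1/φ₃-1/φ₂)x) - Ei((1/φ₃-1/φ₁)x)) - Ei(-x/φ₂) + Ei(-x/φ₁) ]. -/
open Real MeasureTheory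

/-!
Since `Ei' u = eᵘ / u`, for `c = 1/φ₃ - 1/ψ` one has
`d/dt [φ₃ (Ei (-t/ψ) - e^{-t/φ₃} Ei (c t))] = e^{-t/φ₃} Ei (c t)`: the two terms `φ₃ e^{-t/ψ} / t`
cancel. At infinity `e^{-t/φ₃} Ei (c t)` decays exponentially (`Ei (c t)` is bounded if `c < 0`
and `O(e^{c t})` if `0 < c < 1/φ₃`), while `Ei (-t/ψ)` tends to the limit of `Ei` at `-∞`, which
does not depend on `ψ` and so cancels between `ψ = φ₂` and `ψ = φ₁`.
-/

open Filter Topology Asymptotics Set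

noncomputable def EiSeries (u : ℝ) : ℝ :=
  ∑' n : ℕ, u ^ (n + 1) / ((n + 1) * (n + 1).factorial)

lemma Ei_eq_add_log_add_EiSeries (x : ℝ) :
    Ei x = eulerMascheroniConstant + log x + EiSeries x := by
  rw [Ei, log_abs, EiSeries]

lemma summable_pow_succ_div_factorial_succ (u : ℝ) :
    Summable fun n : ℕ => u ^ (n + 1) / ((n + 1).factorial : ℝ) :=
  (summable_nat_add_iff 1).mpr (summable_pow_div_factorial u)

lemma tsum_pow_succ_div_factorial_succ (u : ℝ) :
    ∑' n : ℕ, u ^ (n + 1) / ((n + 1).factorial : ℝ) = exp u - 1 := by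
  rw [exp_eq_exp_ℝ, NormedSpace.exp_eq_tsum_div]
  simp [(summable_pow_div_factorial u).tsum_eq_zero_add]

lemma norm_EiSeries_term_le (u : ℝ) (n : ℕ) :
    ‖u ^ (n + 1) / ((n + 1) * (n + 1).factorial : ℝ)‖ ≤
      |u| ^ (n + 1) / ((n + 1).factorial : ℝ) := by
  rw [norm_div, norm_pow, norm_eq_abs, norm_of_nonneg (by positivity)]
  gcongr
  exact le_mul_of_one_le_left (by positivity) (le_add_of_nonneg_left n.cast_nonneg)

lemma abs_EiSeries_le (u : ℝ) : |EiSeries u| ≤ exp |u| :=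
  calc |EiSeries u| ≤ exp |u| - 1 := by
        rw [← tsum_pow_succ_div_factorial_succ]
        exact tsum_of_norm_bounded (summable_pow_succ_div_factorial_succ |u|).hasSum
          (norm_EiSeries_term_le u)
    _ ≤ exp |u| := by linarith

lemma hasDerivAt_EiSeries_tsum (u : ℝ) :
    HasDerivAt EiSeries (∑' n : ℕ, u ^ n / ((n + 1).factorial : ℝ)) u := by
  have hu : u ∈ Metric.ball (0 : ℝ) (|u| + 1) := by simp
  refine hasDerivAt_tsum_of_isPreconnected
    (u := fun n : ℕ => (|u| + 1) ^ n / ((n + 1).factorial : ℝ))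
    (g' := fun n z => z ^ n / ((n + 1).factorial : ℝ))
    ?_ Metric.isOpen_ball (convex_ball (0 : ℝ) (|u| + 1)).isPreconnected
    (fun n y _ => ?_) (fun n y hy => ?_) hu
    (Summable.of_norm_bounded (summable_pow_succ_div_factorial_succ |u|)
      (norm_EiSeries_term_le u)) hu
  · refine (summable_pow_div_factorial (|u| + 1)).of_nonneg_of_le (fun n => by positivity)
      (fun n => ?_)
    gcongr
    exact n.le_succ
  · refine ((hasDerivAt_pow (n + 1) y).div_const ((n + 1) * ((n + 1).factorial : ℝ))).congr_deriv ?_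
    push_cast
    field_simp
  · rw [mem_ball_zero_iff, norm_eq_abs] at hy
    rw [norm_div, norm_pow, norm_eq_abs, norm_of_nonneg (by positivity)]
    gcongr

lemma hasDerivAt_EiSeries {u : ℝ} (hu : u ≠ 0) :
    HasDerivAt EiSeries ((exp u - 1) / u) u := by
  convert hasDerivAt_EiSeries_tsum u using 1
  rw [div_eq_iff hu, ← tsum_pow_succ_div_factorial_succ, ← tsum_mul_right]
  congr 1 with n
  ring

lemma hasDerivAt_Ei {u : ℝ} (hu : u ≠ 0) : HasDerivAt Ei (exp u / u) u := by
  rw [funext Ei_eq_add_log_add_EiSeries]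
  refine (((hasDerivAt_log hu).const_add _).add (hasDerivAt_EiSeries hu)).congr_deriv ?_
  field_simp
  ring

lemma hasDerivAt_Ei_mul {c l : ℝ} (hc : c ≠ 0) (hl : l ≠ 0) :
    HasDerivAt (fun t => Ei (c * t)) (exp (c * l) / l) l := by
  refine ((hasDerivAt_Ei (mul_ne_zero hc hl)).comp l ((hasDerivAt_id' l).const_mul c)).congr_deriv ?_
  field_simp

lemma abs_Ei_le_two_mul_exp {y : ℝ} (hy : 1 ≤ y) : |Ei y| ≤ 2 * exp y := by
  have hlog : |eulerMascheroniConstant + log y| ≤ exp y := by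
    have hγ := eulerMascheroniConstant_lt_two_thirds
    rw [abs_of_nonneg (by linarith [one_half_lt_eulerMascheroniConstant, log_nonneg hy])]
    linarith [log_le_sub_one_of_pos (by linarith : 0 < y), add_one_le_exp y]
  have hseries := abs_EiSeries_le y
  rw [abs_of_nonneg (by linarith : 0 ≤ y)] at hseries
  rw [Ei_eq_add_log_add_EiSeries]
  linarith [abs_add_le (eulerMascheroniConstant + log y) (EiSeries y)]

lemma integrableOn_exp_neg_div_Ioi_one : IntegrableOn (fun t => exp (-t) / t) (Ioi 1) := by
  refine integrable_of_isBigO_exp_neg one_pos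
    (fun t ht => (continuous_exp.comp continuous_neg).continuousAt.div continuousAt_id
      (by simp only [id]; linarith [mem_Ici.mp ht]) |>.continuousWithinAt) (IsBigO.of_bound 1 ?_)
  filter_upwards [eventually_ge_atTop 1] with t ht
  rw [norm_div, norm_of_nonneg (exp_pos _).le, norm_of_nonneg (by linarith), neg_one_mul,
    one_mul, norm_of_nonneg (exp_pos _).le]
  exact div_le_self (exp_pos _).le ht

lemma tendsto_Ei_neg_atTop :
    Tendsto (fun y => Ei (-y)) atTop (𝓝 (limUnder atTop fun y => Ei (-y))) :=
  tendsto_limUnder_of_hasDerivAt_of_integrableOn_Ioi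
    (fun y (hy : 1 < y) => by
      simpa using hasDerivAt_Ei_mul (neg_ne_zero.mpr one_ne_zero) (by linarith : y ≠ 0))
    integrableOn_exp_neg_div_Ioi_one

lemma exists_isBigO_exp_mul_Ei {φ c : ℝ} (hφ : 0 < φ) (hc : c ≠ 0) (hlt : c < 1 / φ) :
    ∃ δ > 0, (fun l => exp (-l / φ) * Ei (c * l)) =O[atTop] fun l => exp (-δ * l) := by
  rcases hc.lt_or_gt with hneg | hpos
  · have hbdd : (fun l => Ei (c * l)) =O[atTop] fun _ => (1 : ℝ) := by
      refine (tendsto_Ei_neg_atTop.comp (tendsto_id.const_mul_atTop (neg_pos.mpr hneg))).isBigO_one ℝ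
        |>.congr_left fun l => ?_
      simp
    refine ⟨1 / φ, by positivity,
      ((isBigO_refl (fun l => exp (-(1 / φ) * l)) atTop).mul hbdd).congr (fun l => ?_) fun l => ?_⟩
    all_goals ring_nf
  · have hEi : (fun l => Ei (c * l)) =O[atTop] fun l => exp (c * l) := by
      refine IsBigO.of_bound 2 ?_
      filter_upwards [eventually_ge_atTop (1 / c)] with l hl
      rw [norm_of_nonneg (exp_pos _).le]
      exact abs_Ei_le_two_mul_exp (by rwa [div_le_iff₀' hpos] at hl)
    refine ⟨1 / φ - c, by linarith, ((isBigO_refl _ _).mul hEi).congr_right fun l => ?_⟩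
    rw [← exp_add]
    ring_nf

lemma integrableOn_exp_mul_Ei {φ c x : ℝ} (hφ : 0 < φ) (hc : c ≠ 0) (hlt : c < 1 / φ)
    (hx : 0 < x) : IntegrableOn (fun l => exp (-l / φ) * Ei (c * l)) (Ioi x) := by
  obtain ⟨δ, hδ, hO⟩ := exists_isBigO_exp_mul_Ei hφ hc hlt
  refine integrable_of_isBigO_exp_neg hδ (fun l hl => ?_) hO
  have hl : l ≠ 0 := (hx.trans_le hl).ne'
  exact ((continuous_exp.comp (continuous_neg.div_const φ)).continuousAt.mul
    (hasDerivAt_Ei_mul hc hl).continuousAt).continuousWithinAt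

lemma tendsto_exp_mul_Ei_atTop {φ c : ℝ} (hφ : 0 < φ) (hc : c ≠ 0) (hlt : c < 1 / φ) :
    Tendsto (fun l => exp (-l / φ) * Ei (c * l)) atTop (𝓝 0) := by
  obtain ⟨δ, hδ, hO⟩ := exists_isBigO_exp_mul_Ei hφ hc hlt
  exact hO.trans_tendsto (tendsto_exp_atBot.comp
    (tendsto_id.const_mul_atTop_of_neg (neg_neg_iff_pos.mpr hδ)))

lemma one_div_sub_one_div_ne_zero {φ ψ : ℝ} (hne : ψ ≠ φ) : 1 / φ - 1 / ψ ≠ 0 := by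
  rw [sub_ne_zero, one_div, one_div, Ne, inv_inj]
  exact hne.symm

lemma hasDerivAt_Ei_sub_exp_mul_Ei {φ ψ l : ℝ} (hφ : φ ≠ 0) (hψ : ψ ≠ 0) (hne : ψ ≠ φ)
    (hl : l ≠ 0) :
    HasDerivAt (fun t => φ * (Ei (-t / ψ) - exp (-t / φ) * Ei ((1 / φ - 1 / ψ) * t)))
      (exp (-l / φ) * Ei ((1 / φ - 1 / ψ) * l)) l := by
  have hexp : HasDerivAt (fun t => exp (-t / φ)) (exp (-l / φ) * (-1 / φ)) l :=
    ((hasDerivAt_neg l).div_const φ).exp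
  have hEiψ : HasDerivAt (fun t => Ei (-t / ψ)) (exp (-l / ψ) / l) l := by
    have h := hasDerivAt_Ei_mul (div_ne_zero (neg_ne_zero.mpr one_ne_zero) hψ) hl
    simp only [neg_div, neg_mul, one_div_mul_eq_div] at h ⊢
    exact h
  refine ((hEiψ.sub (hexp.mul (hasDerivAt_Ei_mul (one_div_sub_one_div_ne_zero hne) hl))).const_mul
    φ).congr_deriv ?_
  rw [show -l / ψ = -l / φ + (1 / φ - 1 / ψ) * l by field_simp; ring, exp_add]
  field_simp
  ring

lemma integral_Ioi_exp_mul_Ei {φ ψ x : ℝ} (hφ : 0 < φ) (hψ : 0 < ψ) (hne : ψ ≠ φ)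
    (hx : 0 < x) :
    ∫ l in Ioi x, exp (-l / φ) * Ei ((1 / φ - 1 / ψ) * l) =
      φ * (exp (-x / φ) * Ei ((1 / φ - 1 / ψ) * x) - Ei (-x / ψ) +
        limUnder atTop fun y => Ei (-y)) := by
  have hc := one_div_sub_one_div_ne_zero hne
  have hlt : 1 / φ - 1 / ψ < 1 / φ := sub_lt_self _ (one_div_pos.mpr hψ)
  have hderiv (l : ℝ) (hl : 0 < l) :=
    hasDerivAt_Ei_sub_exp_mul_Ei hφ.ne' hψ.ne' hne hl.ne'
  have hEiψ : Tendsto (fun t => Ei (-t / ψ)) atTop (𝓝 (limUnder atTop fun y => Ei (-y))) := by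
    simpa only [Function.comp_def, neg_div, id] using
      tendsto_Ei_neg_atTop.comp (tendsto_id.atTop_div_const hψ)
  have hlim := (hEiψ.sub (tendsto_exp_mul_Ei_atTop hφ hc hlt)).const_mul φ
  rw [sub_zero] at hlim
  rw [integral_Ioi_of_hasDerivAt_of_tendsto (hderiv x hx).continuousAt.continuousWithinAt
    (fun l hl => hderiv l (hx.trans hl)) (integrableOn_exp_mul_Ei hφ hc hlt hx) hlim]
  ring

theorem stmt_12_general (φ₁ φ₂ φ₃ : ℝ) (h₁ : 0 < φ₁) (h₂ : 0 < φ₂) (h₃ : 0 < φ₃)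
    (h13 : φ₁ ≠ φ₃) (h23 : φ₂ ≠ φ₃) (x : ℝ) (hx : 0 < x) :
    ∫ l in Set.Ioi x,
        Real.exp (-l / φ₃) *
          (Ei ((1 / φ₃ - 1 / φ₂) * l) - Ei ((1 / φ₃ - 1 / φ₁) * l)) =
      φ₃ * (Real.exp (-x / φ₃) *
          (Ei ((1 / φ₃ - 1 / φ₂) * x) - Ei ((1 / φ₃ - 1 / φ₁) * x)) -
        Ei (-x / φ₂) + Ei (-x / φ₁)) := by
  have hint (φ : ℝ) (hφ : 0 < φ) (hne : φ ≠ φ₃) :=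
    integrableOn_exp_mul_Ei h₃ (one_div_sub_one_div_ne_zero hne)
      (sub_lt_self _ (one_div_pos.mpr hφ)) hx
  simp_rw [mul_sub (exp _)]
  rw [integral_sub (hint φ₂ h₂ h23) (hint φ₁ h₁ h13), integral_Ioi_exp_mul_Ei h₃ h₂ h23 hx,
    integral_Ioi_exp_mul_Ei h₃ h₁ h13 hx]
  ring

theorem stmt_12 (φ₁ φ₂ φ₃ : ℝ) (h₁ : 0 < φ₁) (h₂ : 0 < φ₂) (h₃ : 0 < φ₃)
    (h12 : φ₁ ≠ φ₂) (h13 : φ₁ ≠ φ₃) (h23 : φ₂ ≠ φ₃) (x : ℝ) (hx : 0 < x) :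
    ∫ l in Set.Ioi x,
        Real.exp (-l / φ₃) *
          (Ei ((1 / φ₃ - 1 / φ₂) * l) - Ei ((1 / φ₃ - 1 / φ₁) * l)) =
      φ₃ * (Real.exp (-x / φ₃) *
          (Ei ((1 / φ₃ - 1 / φ₂) * x) - Ei ((1 / φ₃ - 1 / φ₁) * x)) -
        Ei (-x / φ₂) + Ei (-x / φ₁)) :=
  stmt_12_general φ₁ φ₂ φ₃ h₁ h₂ h₃ h13 h23 x hx
end

section
/- Let s₁, s₂ > 0 and ε₁, ε₂ ∈ ℝ satisfy |ε₁| < s₁ and |ε₂| < s₂ (which holds when sᵢ = 1/φ_{i1} + 1/φ_{i2} and εᵢ = 1/φ_{i1} - 1/φ_{i2} with φ_{ij} > 0). Define, for w₁, w₂ ≥ 0 and w₃ ∈ ℂ with w₁w₂ ≥ |w₃|², p(w₁,w₂,w₃) = (K/π)·e^{-(w₁s₁+w₂s₂)/2}·S(½√((w₁ε₁ - w₂ε₂)² + 4|w₃|²ε₁ε₂)), where S(z) = sinh(z)/z extended by S(0)=1 (and for purely imaginary argument √(negative), S(it)=sin(t)/t), and K = ∏ 1/φ_{ij} > 0. Then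 p(w₁,w₂,w₃) > 0. -/
open Real

/-- Analytic extension of `sinh (√u) / √u` to all real `u`,
given by the power series `∑ uⁿ/(2n+1)!`. -/
noncomputable def T (u : ℝ) : ℝ := ∑' n : ℕ, u ^ n / (2 * n + 1).factorial

lemma summable_pow_div_factorial_two_mul_add_one {u : ℝ} (hu : 0 ≤ u) :
    Summable (fun n : ℕ => u ^ n / (2 * n + 1).factorial) :=
  (Real.summable_pow_div_factorial u).of_nonneg_of_le (fun n => by positivity) fun n =>
    div_le_div_of_nonneg_left (by positivity) (by positivity)
      (by exact_mod_cast Nat.factorial_le (by omega))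

lemma one_le_T {u : ℝ} (hu : 0 ≤ u) : 1 ≤ T u := by
  simpa [T] using (summable_pow_div_factorial_two_mul_add_one hu).le_tsum 0
    (fun n _ => by positivity)

lemma T_pos {u : ℝ} (hu : 0 ≤ u) : 0 < T u :=
  zero_lt_one.trans_le (one_le_T hu)

/-- When `ε₁ ε₂ < 0`, replacing `a` by the larger `x y` only lowers the expression, to
`(x ε₁ + y ε₂)²`. -/
lemma sq_sub_add_four_mul_mul_nonneg {x y a ε₁ ε₂ : ℝ} (ha : 0 ≤ a) (hxy : a ≤ x * y) :
    0 ≤ (x * ε₁ - y * ε₂) ^ 2 + 4 * a * ε₁ * ε₂ := by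
  rcases le_or_gt 0 (ε₁ * ε₂) with h | h
  · nlinarith [sq_nonneg (x * ε₁ - y * ε₂)]
  · nlinarith [sq_nonneg (x * ε₁ + y * ε₂), mul_nonneg (sub_nonneg.2 hxy) (neg_pos.2 h).le]

theorem stmt_13_general (s₁ s₂ ε₁ ε₂ K : ℝ) (hK : 0 < K)
    (w₁ w₂ : ℝ) (w₃ : ℂ)
    (hw : ‖w₃‖ ^ 2 ≤ w₁ * w₂) :
    0 < K / π * Real.exp (-(w₁ * s₁ + w₂ * s₂) / 2) *
        T (((w₁ * ε₁ - w₂ * ε₂) ^ 2 + 4 * ‖w₃‖ ^ 2 * ε₁ * ε₂) / 4) := by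
  have hu := sq_sub_add_four_mul_mul_nonneg (ε₁ := ε₁) (ε₂ := ε₂) (by positivity) hw
  exact mul_pos (mul_pos (div_pos hK pi_pos) (exp_pos _)) (T_pos (by positivity))

theorem stmt_13 (s₁ s₂ ε₁ ε₂ K : ℝ) (hs₁ : 0 < s₁) (hs₂ : 0 < s₂)
    (hε₁ : |ε₁| < s₁) (hε₂ : |ε₂| < s₂) (hK : 0 < K)
    (w₁ w₂ : ℝ) (w₃ : ℂ) (hw₁ : 0 ≤ w₁) (hw₂ : 0 ≤ w₂)
    (hw : ‖w₃‖ ^ 2 ≤ w₁ * w₂) :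
    0 < K / π * Real.exp (-(w₁ * s₁ + w₂ * s₂) / 2) *
        T (((w₁ * ε₁ - w₂ * ε₂) ^ 2 + 4 * ‖w₃‖ ^ 2 * ε₁ * ε₂) / 4) :=
  stmt_13_general s₁ s₂ ε₁ ε₂ K hK w₁ w₂ w₃ hw
end
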